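/- arXiv:1802.03834 — 2 statements merged into one kernel-verified Lean document; each statement's English description precedes it below -/
import Mathlib

section
/- Let b, s be integers with 2 ≤ b < s and define G : [0,1] → [0,1] by G(x) = (1/b)(1 − (1−x)^s). Then G has a unique fixed point 𝔭 in the open interval (0,1); the sequence defined by x_0 = 1 and x_{n+1} = G(x_n) is strictly decreasing and converges to 𝔭; and more generally, for every x ∈ (0,1] the iterates G^n(x) converge to 𝔭 as n → ∞. -/
/-!
Since `1 - (1 - x) ^ s = x * H x` with `H x = ∑ i < s, (1 - x) ^ i`, we have `G x = x * H x / b`.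
On `[0, 1]` the polynomial `H` decreases strictly from `H 0 = s` to `H 1 = 1`, so `H 𝔭 = b` for
exactly one `𝔭 ∈ (0, 1)`; these are the fixed points of `G` in `(0, 1)`, and `G x < x` on `(𝔭, 1]`,
`G x > x` on `(0, 𝔭)`. As `G` is increasing, every orbit starting in `(0, 1]` is monotone and
stays on its side of `𝔭`, and its limit is a fixed point of `G`, hence `𝔭`.
-/

open Filter Topology Set
open Finset (range mem_range sum_lt_sum)

section Iterates

variable {α : Type*} [ConditionallyCompleteLinearOrder α] [TopologicalSpace α] [OrderTopology α]
  {f : α → α} {p c : α}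

/-- The limit `L` of the orbit is a fixed point with `p ≤ L ≤ c`, so `hstep` forces `L = p`. -/
theorem strictAnti_iterate_and_tendsto_of_mem_Ioo (hf : Continuous f)
    (hstep : ∀ y ∈ Ioc p c, f y ∈ Ioo p y) {x : α} (hx : x ∈ Ioc p c) :
    StrictAnti (fun n => f^[n] x) ∧ Tendsto (fun n => f^[n] x) atTop (𝓝 p) := by
  have hmaps : MapsTo f (Ioc p c) (Ioc p c) := fun y hy =>
    ⟨(hstep y hy).1, (hstep y hy).2.le.trans hy.2⟩
  have horbit (n : ℕ) : f^[n] x ∈ Ioc p c := hmaps.iterate n hx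
  have hanti : StrictAnti (fun n => f^[n] x) := strictAnti_nat_of_succ_lt fun n => by
    simpa only [Function.iterate_succ_apply'] using (hstep _ (horbit n)).2
  have hbdd : BddBelow (range fun n => f^[n] x) :=
    ⟨p, forall_mem_range.2 fun n => (horbit n).1.le⟩
  set L := ⨅ n, f^[n] x
  have hlim : Tendsto (fun n => f^[n] x) atTop (𝓝 L) := tendsto_atTop_ciInf hanti.antitone hbdd
  have hfix : f L = L := isFixedPt_of_tendsto_iterate hlim hf.continuousAt
  have hpL : p ≤ L := le_ciInf fun n => (horbit n).1.le
  have hLc : L ≤ c := (ciInf_le hbdd 0).trans hx.2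
  have hLp : L = p := by
    by_contra hne
    exact (hstep _ ⟨lt_of_le_of_ne hpL (Ne.symm hne), hLc⟩).2.ne hfix
  exact ⟨hanti, hLp ▸ hlim⟩

theorem strictMono_iterate_and_tendsto_of_mem_Ioo (hf : Continuous f)
    (hstep : ∀ y ∈ Ico c p, f y ∈ Ioo y p) {x : α} (hx : x ∈ Ico c p) :
    StrictMono (fun n => f^[n] x) ∧ Tendsto (fun n => f^[n] x) atTop (𝓝 p) :=
  strictAnti_iterate_and_tendsto_of_mem_Ioo (α := αᵒᵈ) hf
    (fun y hy => (hstep y hy.symm).symm) hx.symm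

end Iterates

theorem one_sub_one_sub_pow_eq_mul_geom_sum (x : ℝ) (s : ℕ) :
    1 - (1 - x) ^ s = x * ∑ i ∈ range s, (1 - x) ^ i := by
  simpa using (mul_neg_geom_sum (1 - x) s).symm

section

variable {b s : ℕ} {G : ℝ → ℝ}

theorem strictAntiOn_geom_sum_one_sub (hs : 2 ≤ s) :
    StrictAntiOn (fun x : ℝ => ∑ i ∈ range s, (1 - x) ^ i) (Iic 1) := by
  intro x _ y hy hxy
  refine sum_lt_sum (fun i _ => pow_le_pow_left₀ (sub_nonneg.2 hy) (by linarith) i)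
    ⟨1, mem_range.2 hs, by simpa using hxy⟩

theorem exists_geom_sum_one_sub_eq (hb : 1 < b) (hbs : b < s) :
    ∃ p ∈ Ioo (0 : ℝ) 1, ∑ i ∈ range s, (1 - p) ^ i = b := by
  have hs1 : ∑ i ∈ range s, (1 - (1 : ℝ)) ^ i = 1 := by
    simp [zero_pow_eq, Finset.sum_ite_eq', show 0 < s by omega]
  have hs0 : ∑ i ∈ range s, (1 - (0 : ℝ)) ^ i = s := by simp
  obtain ⟨p, ⟨hp0, hp1⟩, hp⟩ := intermediate_value_Icc' zero_le_one
    (by fun_prop : Continuous fun x : ℝ => ∑ i ∈ range s, (1 - x) ^ i).continuousOn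
    (show (b : ℝ) ∈ Icc _ _ by
      rw [hs0, hs1]; exact ⟨by exact_mod_cast hb.le, by exact_mod_cast hbs.le⟩)
  refine ⟨p, ⟨hp0.lt_of_ne ?_, hp1.lt_of_ne ?_⟩, hp⟩
  · rintro rfl
    exact hbs.ne' (by exact_mod_cast hs0.symm.trans hp)
  · rintro rfl
    exact hb.ne (by exact_mod_cast hs1.symm.trans hp)

namespace OneSubPowMap

variable (hG : ∀ x, G x = (1 - (1 - x) ^ s) / b)
include hG

theorem map_eq_mul_geom_sum (x : ℝ) : G x = x * (∑ i ∈ range s, (1 - x) ^ i) / b := by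
  rw [hG, one_sub_one_sub_pow_eq_mul_geom_sum]

theorem map_lt_self_iff (hb : 0 < b) {x : ℝ} (hx : 0 < x) :
    G x < x ↔ ∑ i ∈ range s, (1 - x) ^ i < b := by
  rw [map_eq_mul_geom_sum hG, div_lt_iff₀ (by exact_mod_cast hb), mul_lt_mul_iff_right₀ hx]

theorem self_lt_map_iff (hb : 0 < b) {x : ℝ} (hx : 0 < x) :
    x < G x ↔ b < ∑ i ∈ range s, (1 - x) ^ i := by
  rw [map_eq_mul_geom_sum hG, lt_div_iff₀ (by exact_mod_cast hb), mul_lt_mul_iff_right₀ hx]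

theorem strictMonoOn_map (hb : 0 < b) (hs : s ≠ 0) : StrictMonoOn G (Iic 1) := by
  intro x _ y hy hxy
  rw [hG, hG]
  have : (1 - y) ^ s < (1 - x) ^ s := pow_lt_pow_left₀ (by linarith) (sub_nonneg.2 hy) hs
  gcongr

variable {p : ℝ} (hs : 2 ≤ s) (hp : p ∈ Ioo 0 1) (hHp : ∑ i ∈ range s, (1 - p) ^ i = b)
include hs hp hHp

theorem map_eq_self_iff (hb : 0 < b) {x : ℝ} (hx : x ∈ Ioo 0 1) : G x = x ↔ x = p := by
  rw [map_eq_mul_geom_sum hG, div_eq_iff (by positivity), mul_right_inj' hx.1.ne', ← hHp]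
  exact (strictAntiOn_geom_sum_one_sub hs).injOn.eq_iff hx.2.le hp.2.le

theorem map_mem_Ioo_of_mem_Ioc (hb : 0 < b) {y : ℝ} (hy : y ∈ Ioc p 1) : G y ∈ Ioo p y := by
  refine ⟨?_, ?_⟩
  · calc p = G p := ((map_eq_self_iff hG hs hp hHp hb hp).2 rfl).symm
      _ < G y := strictMonoOn_map hG hb (by omega) hp.2.le hy.2 hy.1
  · rw [map_lt_self_iff hG hb (hp.1.trans hy.1), ← hHp]
    exact strictAntiOn_geom_sum_one_sub hs hp.2.le hy.2 hy.1

theorem map_mem_Ioo_of_mem_Ioo (hb : 0 < b) {y : ℝ} (hy : y ∈ Ioo 0 p) : G y ∈ Ioo y p := by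
  refine ⟨?_, ?_⟩
  · rw [self_lt_map_iff hG hb hy.1, ← hHp]
    exact strictAntiOn_geom_sum_one_sub hs (hy.2.trans hp.2).le hp.2.le hy.2
  · calc G y < G p := strictMonoOn_map hG hb (by omega) (hy.2.trans hp.2).le hp.2.le hy.2
      _ = p := (map_eq_self_iff hG hs hp hHp hb hp).2 rfl

end OneSubPowMap

end

open OneSubPowMap

/-- STATEMENT 18: for integers `2 ≤ b < s`, the map `G(x) = (1/b)(1 − (1−x)^s)` has a
unique fixed point `𝔭` in `(0,1)`; the iterates starting at `x₀ = 1` are strictly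
decreasing and converge to `𝔭`; and for every `x ∈ (0,1]` the iterates `Gⁿ(x)` converge
to `𝔭`. -/
theorem statement18 (b s : ℕ) (hb : 2 ≤ b) (hbs : b < s)
    (G : ℝ → ℝ) (hG : ∀ x : ℝ, G x = (1 - (1 - x) ^ s) / b) :
    (∃! x : ℝ, x ∈ Set.Ioo (0 : ℝ) 1 ∧ G x = x) ∧
    ∀ frakp : ℝ, frakp ∈ Set.Ioo (0 : ℝ) 1 → G frakp = frakp →
      StrictAnti (fun n : ℕ => G^[n] (1 : ℝ)) ∧
      Tendsto (fun n : ℕ => G^[n] (1 : ℝ)) atTop (𝓝 frakp) ∧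
      ∀ x ∈ Set.Ioc (0 : ℝ) 1, Tendsto (fun n : ℕ => G^[n] x) atTop (𝓝 frakp) := by
  have hs : 2 ≤ s := by omega
  have hb0 : 0 < b := by omega
  have hGc : Continuous G := by rw [funext hG]; fun_prop
  obtain ⟨p, hp, hHp⟩ := exists_geom_sum_one_sub_eq hb hbs
  have hfix {x : ℝ} (hx : x ∈ Ioo 0 1) : G x = x ↔ x = p := map_eq_self_iff hG hs hp hHp hb0 hx
  refine ⟨⟨p, ⟨hp, (hfix hp).2 rfl⟩, fun q hq => (hfix hq.1).1 hq.2⟩, ?_⟩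
  rintro q hq hGq
  have hqp := (hfix hq).1 hGq
  subst q
  have hdown {x : ℝ} (hx : x ∈ Ioc p 1) :
      StrictAnti (fun n => G^[n] x) ∧ Tendsto (fun n => G^[n] x) atTop (𝓝 p) :=
    strictAnti_iterate_and_tendsto_of_mem_Ioo hGc
      (fun y hy => map_mem_Ioo_of_mem_Ioc hG hs hp hHp hb0 hy) hx
  refine ⟨(hdown ⟨hp.2, le_rfl⟩).1, (hdown ⟨hp.2, le_rfl⟩).2, fun x hx => ?_⟩
  rcases lt_trichotomy x p with hxp | rfl | hpx
  · exact (strictMono_iterate_and_tendsto_of_mem_Ioo hGc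
      (fun y hy => map_mem_Ioo_of_mem_Ioo hG hs hp hHp hb0 ⟨hx.1.trans_le hy.1, hy.2⟩)
      ⟨le_rfl, hxp⟩).2
  · simp only [Function.iterate_fixed hGq, tendsto_const_nhds]
  · exact (hdown ⟨hpx, hx.2⟩).2
end

section
/- Let b, s be integers with 2 ≤ b < s. Define functions φ_n : ℝ → ℝ by φ_0(t) = e^t and φ_{n+1}(t) = (b−1)/b + (1/b)·(φ_n((b/s)t))^s. Then for every t ∈ ℝ the sequence φ_n(t) converges to a finite limit φ_∞(t); the limit satisfies the functional equation φ_∞(t) = (b−1)/b + (1/b)·(φ_∞((b/s)t))^s for all t ∈ ℝ; and lim_{t→−∞} φ_∞(t) = 1 − 𝔭, where 𝔭 is the unique solution in (0,1) of 𝔭 = (1/b)(1 − (1−𝔭)^s). -/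
/-!
Write `r = b / s < 1` and `F x = (b - 1) / b + x ^ s / b`, so that `φₙ₊₁ t = F (φₙ (r t))`.
Bernoulli's inequality gives `φ₀ ≤ φ₁`, so `φₙ t` increases with `n`; it also increases
with `t`.

The point `1` is a repelling fixed point of `F` (`F' 1 = 1 / r`). In the variable
`w = 1 / (1 - x)`, `F` is dominated by the affine map `w ↦ r w + b`, with fixed point
`K = b s / (s - b)`, on both sides of `1` as long as `s (x - 1) < 1`. Since
`1 / (1 - e^t) ≤ 1 - 1 / t`, induction on `n` gives `1 / (1 - φₙ t) ≤ K - 1 / t` for `t < 0`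
and for small `t > 0`. For small `t > 0` this traps `φₙ t` in `(1, 2)`, and
`φₙ₊₁ t = F (φₙ (r t))` carries the bound to every `t`; at `t = -1` it keeps `φₙ (-1)`
uniformly below `1`.

So `φ_∞ = sup φₙ` exists and satisfies the functional equation by continuity of `F`. It is
monotone and at least `(b - 1) / b`, so it has a limit `ℓ` at `-∞`; `ℓ` is a fixed point of
`F` in `[(b - 1) / b, 1)`, and `1 - ℓ` is then the fixed point `𝔭`.
-/

open Filter Topology Real Set

noncomputable section

def mgfStep (b s : ℕ) (x : ℝ) : ℝ := ((b : ℝ) - 1) / b + 1 / b * x ^ s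

def mgfSeq (b s : ℕ) : ℕ → ℝ → ℝ
  | 0, t => exp t
  | n + 1, t => mgfStep b s (mgfSeq b s n ((b : ℝ) / s * t))

def mgfLim (b s : ℕ) (t : ℝ) : ℝ := ⨆ n, mgfSeq b s n t

end

theorem pow_mul_one_sub_mul_le_one (s : ℕ) {δ : ℝ} (hδ : |δ| ≤ 1) :
    (1 + δ) ^ s * (1 - s * δ) ≤ 1 := by
  obtain ⟨hδ₁, hδ₂⟩ := abs_le.mp hδ
  have bernoulli : 1 - s * δ ≤ (1 - δ) ^ s := by
    simpa [sub_eq_add_neg] using one_add_mul_le_pow (a := -δ) (by linarith) s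
  calc (1 + δ) ^ s * (1 - s * δ) ≤ (1 + δ) ^ s * (1 - δ) ^ s :=
        mul_le_mul_of_nonneg_left bernoulli (pow_nonneg (by linarith) s)
    _ = (1 - δ ^ 2) ^ s := by rw [← mul_pow]; ring
    _ ≤ 1 := pow_le_one₀ (by nlinarith) (by nlinarith)

theorem one_div_one_sub_exp_le {t : ℝ} (ht : t ≠ 0) : 1 / (1 - exp t) ≤ 1 - 1 / t := by
  have key : (1 - t) * exp t ≤ 1 := by
    have h := add_one_le_exp (-t)
    rw [exp_neg] at h
    calc (1 - t) * exp t ≤ (exp t)⁻¹ * exp t := by gcongr; linarith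
      _ = 1 := inv_mul_cancel₀ (exp_pos t).ne'
  rcases ht.lt_or_gt with ht | ht
  · have h1 : 0 < 1 - exp t := by linarith [exp_lt_one_iff.mpr ht]
    rw [div_le_iff₀ h1, one_sub_div ht.ne, div_mul_eq_mul_div, le_div_iff_of_neg ht]
    nlinarith
  · have h1 : 1 - exp t < 0 := by linarith [one_lt_exp_iff.mpr ht]
    rw [div_le_iff_of_neg h1, one_sub_div ht.ne', div_mul_eq_mul_div, div_le_iff₀ ht]
    nlinarith

theorem one_lt_and_mul_sub_one_lt_one {y c : ℝ} (hc : 0 ≤ c) (h : 1 / (1 - y) < -c) :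
    1 < y ∧ c * (y - 1) < 1 := by
  have hy : 1 - y < 0 := by
    by_contra! hy
    linarith [one_div_nonneg.mpr hy]
  rw [div_lt_iff_of_neg hy] at h
  exact ⟨by linarith, by linarith⟩

section Step

variable {b s : ℕ}

theorem one_sub_mgfStep (hb : b ≠ 0) (x : ℝ) : 1 - mgfStep b s x = (1 - x ^ s) / b := by
  unfold mgfStep
  field_simp
  ring

theorem continuous_mgfStep : Continuous (mgfStep b s) := by
  unfold mgfStep
  fun_prop

theorem mgfStep_le_mgfStep (hb : 0 < b) {x y : ℝ} (hx : 0 ≤ x) (hxy : x ≤ y) :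
    mgfStep b s x ≤ mgfStep b s y := by
  unfold mgfStep
  gcongr

theorem sub_one_div_le_mgfStep (hb : 0 < b) {x : ℝ} (hx : 0 ≤ x) :
    ((b : ℝ) - 1) / b ≤ mgfStep b s x := by
  unfold mgfStep
  have : 0 ≤ 1 / (b : ℝ) * x ^ s := by positivity
  linarith

theorem mgfStep_nonneg (hb : 0 < b) {x : ℝ} (hx : 0 ≤ x) : 0 ≤ mgfStep b s x := by
  have : (1 : ℝ) ≤ b := Nat.one_le_cast.mpr hb
  exact (div_nonneg (by linarith) (by positivity)).trans (sub_one_div_le_mgfStep hb hx)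

theorem mgfStep_lt_one (hb : b ≠ 0) (hs : s ≠ 0) {x : ℝ} (hx₀ : 0 ≤ x) (hx₁ : x < 1) :
    mgfStep b s x < 1 := by
  have : 0 < (1 - x ^ s) / b := div_pos (by linarith [pow_lt_one₀ hx₀ hx₁ hs]) (by positivity)
  linarith [one_sub_mgfStep (s := s) hb x]

theorem le_mgfStep_of_pow_eq (hb : b ≠ 0) {x y : ℝ} (hx : 0 ≤ x) (hxy : y ^ s = x ^ b) :
    x ≤ mgfStep b s y := by
  have bernoulli := one_add_mul_le_pow (a := x - 1) (by linarith) b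
  rw [add_sub_cancel] at bernoulli
  unfold mgfStep
  rw [hxy]
  have : (0 : ℝ) < b := by positivity
  field_simp
  linarith

theorem one_div_one_sub_mgfStep_le (hb : b ≠ 0) (hs : s ≠ 0) {y : ℝ} (hy₀ : 0 ≤ y)
    (hy₁ : y ≠ 1) (hys : s * (y - 1) < 1) : 1 / (1 - mgfStep b s y) ≤ b / s * (1 / (1 - y)) + b := by
  have hs' : (1 : ℝ) ≤ s := by exact_mod_cast Nat.one_le_iff_ne_zero.mpr hs
  have bernoulli := pow_mul_one_sub_mul_le_one s (δ := y - 1) (by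
    rw [abs_le]; constructor <;> nlinarith)
  rw [add_sub_cancel] at bernoulli
  set X := 1 - y ^ s with hX
  set Y := (s : ℝ) * (1 - y) with hY
  have hXY : 0 < X * Y := by
    rcases hy₁.lt_or_gt with h | h
    · exact mul_pos (by linarith [pow_lt_one₀ hy₀ h hs]) (by nlinarith)
    · exact mul_pos_of_neg_of_neg (by linarith [one_lt_pow₀ h hs]) (by nlinarith)
  have hX₀ : X ≠ 0 := left_ne_zero_of_mul hXY.ne'
  have hY₀ : Y ≠ 0 := right_ne_zero_of_mul hXY.ne'
  have hYX : Y ≤ X * (1 + Y) := by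
    have : X * (1 + Y) - Y = 1 - y ^ s * (1 - s * (y - 1)) := by rw [hX, hY]; ring
    linarith
  calc 1 / (1 - mgfStep b s y) = b * Y / (X * Y) := by
        rw [one_sub_mgfStep hb, one_div_div, ← hX]
        field_simp
    _ ≤ b * (X * (1 + Y)) / (X * Y) := by gcongr
    _ = b / s * (1 / (1 - y)) + b := by
        rw [hY]
        field_simp

end Step

section Seq

variable {b s : ℕ}

theorem mgfSeq_nonneg (hb : 0 < b) (n : ℕ) (t : ℝ) : 0 ≤ mgfSeq b s n t := by
  induction n generalizing t with
  | zero => exact (exp_pos t).le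
  | succ n ih => exact mgfStep_nonneg hb (ih _)

theorem mgfSeq_monotone (hb : 0 < b) (n : ℕ) : Monotone (mgfSeq b s n) := by
  induction n with
  | zero => exact exp_monotone
  | succ n ih =>
    intro t t' h
    exact mgfStep_le_mgfStep hb (mgfSeq_nonneg hb _ _) (ih (by gcongr))

theorem mgfSeq_le_succ (hb : 0 < b) (hs : s ≠ 0) (n : ℕ) (t : ℝ) :
    mgfSeq b s n t ≤ mgfSeq b s (n + 1) t := by
  induction n generalizing t with
  | zero =>
    refine le_mgfStep_of_pow_eq (by omega) (exp_pos t).le ?_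
    show exp (b / s * t) ^ s = exp t ^ b
    rw [← exp_nat_mul, ← exp_nat_mul]
    field_simp
  | succ n ih =>
    exact mgfStep_le_mgfStep hb (mgfSeq_nonneg hb _ _) (ih _)

theorem mgfSeq_lt_one (hb : 0 < b) (hs : 0 < s) (n : ℕ) {t : ℝ} (ht : t < 0) :
    mgfSeq b s n t < 1 := by
  induction n generalizing t with
  | zero => exact exp_lt_one_iff.mpr ht
  | succ n ih =>
    have hrt : (b : ℝ) / s * t < 0 :=
      mul_neg_of_pos_of_neg (div_pos (Nat.cast_pos.mpr hb) (Nat.cast_pos.mpr hs)) ht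
    exact mgfStep_lt_one hb.ne' hs.ne' (mgfSeq_nonneg hb _ _) (ih hrt)

theorem exists_one_div_one_sub_mgfSeq_le (hb : 0 < b) (hbs : b < s) :
    ∃ K ≥ (1 : ℝ), ∀ (n : ℕ) (t : ℝ), t ≠ 0 → t * (K + s) < 1 →
      1 / (1 - mgfSeq b s n t) ≤ K - 1 / t := by
  have hb' : (1 : ℝ) ≤ b := Nat.one_le_cast.mpr hb
  have hbs' : (b : ℝ) < s := by exact_mod_cast hbs
  set r : ℝ := b / s
  have hr₀ : 0 < r := div_pos (by linarith) (by linarith)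
  have hr₁ : r < 1 := (div_lt_one (by linarith)).mpr hbs'
  set K : ℝ := b * s / (s - b)
  have hK : r * K + b = K := by
    simp only [r, K]
    field_simp [(sub_pos.mpr hbs').ne', (by linarith : (s : ℝ) ≠ 0)]
    ring
  refine ⟨K, by nlinarith, fun n => ?_⟩
  induction n with
  | zero => exact fun t ht _ => (one_div_one_sub_exp_le ht).trans (by nlinarith)
  | succ n ih =>
    intro t ht htK
    have hrt : r * t ≠ 0 := mul_ne_zero hr₀.ne' ht
    have ih' := ih (r * t) hrt (by rw [mul_assoc]; nlinarith)
    set y := mgfSeq b s n (r * t)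
    have hy : y ≠ 1 ∧ s * (y - 1) < 1 := by
      rcases ht.lt_or_gt with ht | ht
      · have hy₁ : y < 1 := mgfSeq_lt_one hb (by omega) n (mul_neg_of_pos_of_neg hr₀ ht)
        exact ⟨hy₁.ne, by nlinarith⟩
      · have h₁ : K + s < 1 / t := by rwa [lt_div_iff₀ ht, mul_comm]
        have h₂ : 1 / t ≤ 1 / (r * t) :=
          one_div_le_one_div_of_le (by positivity) (by nlinarith)
        obtain ⟨hy₁, hys⟩ :=
          one_lt_and_mul_sub_one_lt_one (y := y) (Nat.cast_nonneg s) (by linarith)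
        exact ⟨hy₁.ne', hys⟩
    calc 1 / (1 - mgfSeq b s (n + 1) t) ≤ r * (1 / (1 - y)) + b :=
          one_div_one_sub_mgfStep_le (by omega) (by omega) (mgfSeq_nonneg hb _ _) hy.1 hy.2
      _ ≤ r * (K - 1 / (r * t)) + b := by gcongr
      _ = K - 1 / t := by
          have : r * (1 / (r * t)) = 1 / t := by field_simp
          linarith [mul_sub r K (1 / (r * t))]

theorem bddAbove_mgfSeq_of_mul (hb : 0 < b) {t : ℝ}
    (h : BddAbove (range fun n ↦ mgfSeq b s n (b / s * t))) :
    BddAbove (range fun n ↦ mgfSeq b s n t) := by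
  obtain ⟨B, hB⟩ := h
  refine ⟨max (exp t) (mgfStep b s B), ?_⟩
  rintro _ ⟨_ | n, rfl⟩
  · exact le_max_left _ _
  · exact (mgfStep_le_mgfStep hb (mgfSeq_nonneg hb _ _) (hB ⟨n, rfl⟩)).trans (le_max_right _ _)

theorem bddAbove_mgfSeq (hb : 0 < b) (hbs : b < s) (t : ℝ) :
    BddAbove (range fun n ↦ mgfSeq b s n t) := by
  obtain ⟨K, hK, hgap⟩ := exists_one_div_one_sub_mgfSeq_le hb hbs
  set t₀ := 1 / (K + s + 1)
  have ht₀ : 0 < t₀ := by positivity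
  have hbdd₀ : ∀ t ≤ t₀, BddAbove (range fun n ↦ mgfSeq b s n t) := by
    refine fun t ht ↦ ⟨2, ?_⟩
    rintro _ ⟨n, rfl⟩
    refine (mgfSeq_monotone hb n ht).trans ?_
    have hw : 1 / (1 - mgfSeq b s n t₀) < -1 := by
      have := hgap n t₀ ht₀.ne'
        (by rw [div_mul_eq_mul_div, div_lt_one (by positivity)]; linarith)
      rw [one_div_one_div] at this
      have hs : (0 : ℝ) < s := by exact_mod_cast (by omega : 0 < s)
      linarith
    linarith [(one_lt_and_mul_sub_one_lt_one zero_le_one hw).2]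
  have hbddₖ : ∀ (k : ℕ) (t : ℝ), ((b : ℝ) / s) ^ k * t ≤ t₀ →
      BddAbove (range fun n ↦ mgfSeq b s n t) := by
    intro k
    induction k with
    | zero => simpa using hbdd₀
    | succ k ih =>
      exact fun t ht ↦ bddAbove_mgfSeq_of_mul hb (ih _ (by rwa [← mul_assoc, ← pow_succ]))
  rcases le_or_gt t 0 with ht | ht
  · exact hbddₖ 0 t (by simpa using ht.trans ht₀.le)
  · have hr₁ : (b : ℝ) / s < 1 :=
      (div_lt_one (by exact_mod_cast (by omega : 0 < s))).mpr (by exact_mod_cast hbs)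
    obtain ⟨k, hk⟩ := exists_pow_lt_of_lt_one (div_pos ht₀ ht) hr₁
    exact hbddₖ k t ((lt_div_iff₀ ht).mp hk).le

end Seq

section Lim

variable {b s : ℕ}

theorem tendsto_mgfSeq (hb : 0 < b) (hbs : b < s) (t : ℝ) :
    Tendsto (fun n ↦ mgfSeq b s n t) atTop (𝓝 (mgfLim b s t)) :=
  tendsto_atTop_ciSup (monotone_nat_of_le_succ fun n ↦ mgfSeq_le_succ hb (by omega) n t)
    (bddAbove_mgfSeq hb hbs t)

theorem mgfLim_eq_mgfStep (hb : 0 < b) (hbs : b < s) (t : ℝ) :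
    mgfLim b s t = mgfStep b s (mgfLim b s (b / s * t)) :=
  tendsto_nhds_unique ((tendsto_mgfSeq hb hbs t).comp (tendsto_add_atTop_nat 1))
    ((continuous_mgfStep.tendsto _).comp (tendsto_mgfSeq hb hbs _))

theorem monotone_mgfLim (hb : 0 < b) (hbs : b < s) : Monotone (mgfLim b s) :=
  fun _ t' h ↦ ciSup_mono (bddAbove_mgfSeq hb hbs t') fun n ↦ mgfSeq_monotone hb n h

theorem sub_one_div_le_mgfLim (hb : 0 < b) (hbs : b < s) (t : ℝ) :
    ((b : ℝ) - 1) / b ≤ mgfLim b s t :=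
  (sub_one_div_le_mgfStep hb (mgfSeq_nonneg hb 0 _)).trans
    (le_ciSup (bddAbove_mgfSeq hb hbs t) 1)

theorem mgfLim_neg_one_lt_one (hb : 0 < b) (hbs : b < s) : mgfLim b s (-1) < 1 := by
  obtain ⟨K, hK, hgap⟩ := exists_one_div_one_sub_mgfSeq_le hb hbs
  refine (ciSup_le fun n ↦ ?_).trans_lt (sub_lt_self 1 (by positivity : 0 < 1 / (K + 1)))
  have hw := hgap n (-1) (by norm_num) (by linarith [(Nat.cast_nonneg s : (0 : ℝ) ≤ s)])
  have hy : mgfSeq b s n (-1) < 1 := mgfSeq_lt_one hb (by omega) n (by norm_num)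
  rw [div_neg, div_one, sub_neg_eq_add, one_div_le (by linarith) (by linarith)] at hw
  linarith

theorem exists_tendsto_mgfLim_atBot (hb : 0 < b) (hbs : b < s) :
    ∃ ℓ, ((b : ℝ) - 1) / b ≤ ℓ ∧ ℓ < 1 ∧ mgfStep b s ℓ = ℓ ∧
      Tendsto (mgfLim b s) atBot (𝓝 ℓ) := by
  have hbdd : BddBelow (range (mgfLim b s)) :=
    ⟨_, by rintro _ ⟨t, rfl⟩; exact sub_one_div_le_mgfLim hb hbs t⟩
  have hlim := tendsto_atBot_ciInf (monotone_mgfLim hb hbs) hbdd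
  have hr : Tendsto (fun t : ℝ ↦ (b : ℝ) / s * t) atBot atBot :=
    tendsto_id.const_mul_atBot
      (div_pos (Nat.cast_pos.mpr hb) (Nat.cast_pos.mpr (by omega : 0 < s)))
  refine ⟨_, le_ciInf (sub_one_div_le_mgfLim hb hbs),
    (ciInf_le hbdd (-1)).trans_lt (mgfLim_neg_one_lt_one hb hbs), ?_, hlim⟩
  refine tendsto_nhds_unique ?_ hlim
  exact (tendsto_congr (mgfLim_eq_mgfStep hb hbs)).mpr
    ((continuous_mgfStep.tendsto _).comp (hlim.comp hr))

end Lim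

theorem statement19_general (b s : ℕ) (hb : 2 ≤ b) (hbs : b < s)
    (φ : ℕ → ℝ → ℝ) (h0 : ∀ t : ℝ, φ 0 t = Real.exp t)
    (hrec : ∀ (n : ℕ) (t : ℝ),
      φ (n + 1) t = ((b : ℝ) - 1) / b + (1 / b) * (φ n (((b : ℝ) / s) * t)) ^ s)
    (frakp : ℝ)
    (huniq : ∀ x ∈ Set.Ioo (0 : ℝ) 1, x = (1 - (1 - x) ^ s) / b → x = frakp) :
    ∃ φinf : ℝ → ℝ,
      (∀ t : ℝ, Tendsto (fun n : ℕ => φ n t) atTop (𝓝 (φinf t))) ∧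
      (∀ t : ℝ, φinf t = ((b : ℝ) - 1) / b + (1 / b) * (φinf (((b : ℝ) / s) * t)) ^ s) ∧
      Tendsto φinf atBot (𝓝 (1 - frakp)) := by
  have hφ : φ = mgfSeq b s := by
    funext n t
    induction n generalizing t with
    | zero => exact h0 t
    | succ n ih => rw [hrec, ih]; rfl
  subst hφ
  obtain ⟨ℓ, hℓ₀, hℓ₁, hℓ, hlim⟩ := exists_tendsto_mgfLim_atBot (by omega) hbs
  have hb' : (2 : ℝ) ≤ b := by exact_mod_cast hb
  have hp : 1 - ℓ = frakp := by
    refine huniq _ ⟨by linarith, ?_⟩ ?_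
    · have : 0 < ((b : ℝ) - 1) / b := div_pos (by linarith) (by linarith)
      linarith
    · rw [sub_sub_cancel, ← one_sub_mgfStep (by omega), hℓ]
  refine ⟨mgfLim b s, tendsto_mgfSeq (by omega) hbs, mgfLim_eq_mgfStep (by omega) hbs, ?_⟩
  rwa [← hp, sub_sub_cancel]

/-- STATEMENT 19: for integers `2 ≤ b < s` and the recursively defined moment generating
functions `φ₀(t) = e^t`, `φ_{n+1}(t) = (b−1)/b + (1/b)(φ_n((b/s)t))^s`, the pointwise limit
`φ_∞` exists, satisfies the fixed-point functional equation, and tends to `1 − 𝔭` as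
`t → −∞`, where `𝔭` is the unique solution in `(0,1)` of `𝔭 = (1/b)(1 − (1−𝔭)^s)`. -/
theorem statement19 (b s : ℕ) (hb : 2 ≤ b) (hbs : b < s)
    (φ : ℕ → ℝ → ℝ) (h0 : ∀ t : ℝ, φ 0 t = Real.exp t)
    (hrec : ∀ (n : ℕ) (t : ℝ),
      φ (n + 1) t = ((b : ℝ) - 1) / b + (1 / b) * (φ n (((b : ℝ) / s) * t)) ^ s)
    (frakp : ℝ) (hmem : frakp ∈ Set.Ioo (0 : ℝ) 1)
    (hfix : frakp = (1 - (1 - frakp) ^ s) / b)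
    (huniq : ∀ x ∈ Set.Ioo (0 : ℝ) 1, x = (1 - (1 - x) ^ s) / b → x = frakp) :
    ∃ φinf : ℝ → ℝ,
      (∀ t : ℝ, Tendsto (fun n : ℕ => φ n t) atTop (𝓝 (φinf t))) ∧
      (∀ t : ℝ, φinf t = ((b : ℝ) - 1) / b + (1 / b) * (φinf (((b : ℝ) / s) * t)) ^ s) ∧
      Tendsto φinf atBot (𝓝 (1 - frakp)) :=
  statement19_general b s hb hbs φ h0 hrec frakp huniq
end
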